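/- Suppose φ is real-analytic on 𝕋³ with φ(0) ≠ 0 and let μ₀ = (∫_{𝕋³} φ(t)²/u(0,t) dt)^{−1}. Then the function f(q) = φ(q)/u(0,q) satisfies h_{μ₀}(0)f = 0 pointwise, and f ∈ L¹(𝕋³) \ L²(𝕋³). -/

import Mathlib

open Real MeasureTheory

noncomputable def eps (p : Fin 3 → ℝ) : ℝ := 3 - Real.cos (p 0) - Real.cos (p 1) - Real.cos (p 2)

noncomputable def uu (p q : Fin 3 → ℝ) : ℝ := eps p + eps (p - q) + eps q

/-- The torus `𝕋³`, identified with the cube `(-π, π]³`. -/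
def T3 : Set (Fin 3 → ℝ) := Set.univ.pi fun _ => Set.Ioc (-Real.pi) Real.pi

/-- `m(p) = min_{q ∈ 𝕋³} u(p,q)`, the bottom of the essential spectrum. -/
noncomputable def mfun (p : Fin 3 → ℝ) : ℝ := sInf (uu p '' T3)

/-- The Fredholm determinant `Δ_μ(p,z) = 1 - μ ∫_{𝕋³} φ(t)²/(u(p,t) - z) dt`. -/
noncomputable def Δ (μ : ℝ) (φ : (Fin 3 → ℝ) → ℝ) (p : Fin 3 → ℝ) (z : ℝ) : ℝ :=
  1 - μ * ∫ t in T3, φ t ^ 2 / (uu p t - z)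

/-! On the cube `T3`, `u(0,q) = 2 ε(q)` is comparable to `‖q‖²` from both sides, the lower bound
coming from `1 - cos x ≥ 2x²/π²` for `|x| ≤ π`. Hence `|φ/u(0,·)| ≲ ‖q‖⁻²`, which is integrable
in dimension 3, whereas `φ(0) ≠ 0` gives `(φ/u(0,·))² ≳ ‖q‖⁻⁴` near the origin, which is not.
The same lower bound on `φ²` near `0` makes `∫ φ²/u(0,·)` positive, so `μ₀` is its genuine
inverse and the eigenvalue equation reduces to an identity. -/

open Set Metric Module Topology

theorem integrableOn_ball_norm_rpow_iff {E : Type*} [NormedAddCommGroup E] [NormedSpace ℝ E]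
    [FiniteDimensional ℝ E] [MeasurableSpace E] [BorelSpace E] [Nontrivial E] (μ : Measure E)
    [μ.IsAddHaarMeasure] {s r : ℝ} (hr : 0 < r) :
    IntegrableOn (fun x : E => ‖x‖ ^ s) (ball 0 r) μ ↔ -(finrank ℝ E : ℝ) < s := by
  have hd : 1 ≤ finrank ℝ E := finrank_pos
  rw [integrableOn_fun_norm_addHaar μ (f := fun y => y ^ s),
    integrableOn_congr_fun (g := fun y => y ^ ((finrank ℝ E : ℝ) - 1 + s)) ?_ measurableSet_Ioo,
    intervalIntegral.integrableOn_Ioo_rpow_iff hr]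
  · constructor <;> intro h <;> linarith
  · intro y hy
    dsimp only
    rw [smul_eq_mul, ← Real.rpow_natCast, ← Real.rpow_add hy.1, Nat.cast_sub hd, Nat.cast_one]

theorem eps_zero : eps 0 = 0 := by
  norm_num [eps]

theorem uu_zero_left (q : Fin 3 → ℝ) : uu 0 q = 2 * eps q := by
  simp only [uu, eps, zero_sub, Pi.neg_apply, Pi.zero_apply, Real.cos_neg, Real.cos_zero]
  ring

theorem continuous_uu_zero_left : Continuous (uu 0) := by
  unfold uu eps
  fun_prop

theorem eps_le_norm_sq (q : Fin 3 → ℝ) : eps q ≤ 3 / 2 * ‖q‖ ^ 2 := by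
  have key (i : Fin 3) : 1 - Real.cos (q i) ≤ ‖q‖ ^ 2 / 2 := by
    have hi : |q i| ≤ ‖q‖ := by simpa using norm_le_pi_norm q i
    nlinarith [Real.one_sub_sq_div_two_le_cos (x := q i), sq_abs (q i), abs_nonneg (q i)]
  unfold eps
  linarith [key 0, key 1, key 2]

theorem eps_eq_sum (q : Fin 3 → ℝ) : eps q = ∑ i, (1 - Real.cos (q i)) := by
  rw [Fin.sum_univ_three, eps]
  ring

theorem norm_sq_le_eps {q : Fin 3 → ℝ} (hq : ∀ i, |q i| ≤ π) :
    2 / π ^ 2 * ‖q‖ ^ 2 ≤ eps q := by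
  obtain ⟨i, -, hi⟩ := Finset.univ.exists_mem_eq_sup Finset.univ_nonempty fun i => ‖q i‖₊
  have hnorm : ‖q‖ = |q i| := by
    rw [Pi.norm_def, hi, coe_nnnorm, Real.norm_eq_abs]
  calc 2 / π ^ 2 * ‖q‖ ^ 2 ≤ 1 - Real.cos (q i) := by
        rw [hnorm, sq_abs]
        linarith [Real.cos_le_one_sub_mul_cos_sq (hq i)]
    _ ≤ eps q := by
        rw [eps_eq_sum]
        exact Finset.single_le_sum (fun j _ => sub_nonneg.2 (Real.cos_le_one (q j)))
          (Finset.mem_univ i)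

theorem abs_le_pi_of_mem_T3 {q : Fin 3 → ℝ} (hq : q ∈ T3) (i : Fin 3) : |q i| ≤ π :=
  abs_le.2 ⟨(hq i trivial).1.le, (hq i trivial).2⟩

theorem measurableSet_T3 : MeasurableSet T3 :=
  MeasurableSet.univ_pi fun _ => measurableSet_Ioc

theorem T3_subset_closedBall : T3 ⊆ closedBall 0 π := fun _ hq =>
  mem_closedBall_zero_iff.2 <| (pi_norm_le_iff_of_nonneg pi_pos.le).2 fun i =>
    (Real.norm_eq_abs _).trans_le (abs_le_pi_of_mem_T3 hq i)

theorem ball_subset_T3 {r : ℝ} (hr : r ≤ π) : ball 0 r ⊆ T3 := by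
  rintro q hq i -
  have := (abs_lt.1 <| ((Real.norm_eq_abs _).symm.trans_le (norm_le_pi_norm q i)).trans_lt
    (mem_ball_zero_iff.1 hq))
  exact ⟨by linarith, by linarith⟩

theorem norm_sq_le_uu_zero_left {q : Fin 3 → ℝ} (hq : q ∈ T3) :
    4 / π ^ 2 * ‖q‖ ^ 2 ≤ uu 0 q := by
  calc 4 / π ^ 2 * ‖q‖ ^ 2 = 2 * (2 / π ^ 2 * ‖q‖ ^ 2) := by ring
    _ ≤ uu 0 q := by
      rw [uu_zero_left]
      gcongr
      exact norm_sq_le_eps (abs_le_pi_of_mem_T3 hq)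

theorem uu_zero_left_pos {q : Fin 3 → ℝ} (hq : q ∈ T3) (hq0 : q ≠ 0) : 0 < uu 0 q :=
  lt_of_lt_of_le (by positivity) (norm_sq_le_uu_zero_left hq)

theorem abs_div_uu_zero_left_le {q : Fin 3 → ℝ} (hq : q ∈ T3) (b : ℝ) :
    |b / uu 0 q| ≤ π ^ 2 / 4 * |b| * ‖q‖ ^ (-2 : ℝ) := by
  rcases eq_or_ne q 0 with rfl | hq0
  · simp [uu_zero_left, eps_zero]
  have hu := uu_zero_left_pos hq hq0
  rw [Real.rpow_neg (norm_nonneg q), Real.rpow_two, abs_div, abs_of_pos hu]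
  calc |b| / uu 0 q ≤ |b| / (4 / π ^ 2 * ‖q‖ ^ 2) :=
        div_le_div_of_nonneg_left (abs_nonneg b) (by positivity) (norm_sq_le_uu_zero_left hq)
    _ = _ := by field_simp

theorem integrableOn_T3_div_uu_zero_left {ψ : (Fin 3 → ℝ) → ℝ} (hψ : Continuous ψ) :
    IntegrableOn (fun q => ψ q / uu 0 q) T3 := by
  obtain ⟨C, hC⟩ := (isCompact_closedBall (0 : Fin 3 → ℝ) π).exists_bound_of_continuousOn
    hψ.continuousOn
  have hdom : IntegrableOn (fun q : Fin 3 → ℝ => ‖q‖ ^ (-2 : ℝ)) T3 :=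
    ((integrableOn_ball_norm_rpow_iff volume (by norm_num : (0 : ℝ) < 4)).2
      (by norm_num)).mono_set (T3_subset_closedBall.trans (closedBall_subset_ball pi_lt_four))
  refine (hdom.const_mul (π ^ 2 / 4 * C)).mono'
    (hψ.measurable.div continuous_uu_zero_left.measurable).aestronglyMeasurable ?_
  filter_upwards [ae_restrict_mem measurableSet_T3] with q hq
  calc ‖ψ q / uu 0 q‖ ≤ π ^ 2 / 4 * |ψ q| * ‖q‖ ^ (-2 : ℝ) := abs_div_uu_zero_left_le hq _
    _ ≤ π ^ 2 / 4 * C * ‖q‖ ^ (-2 : ℝ) := by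
      gcongr
      exact hC q (T3_subset_closedBall hq)

theorem exists_ball_subset_T3_le_sq {φ : (Fin 3 → ℝ) → ℝ} (hφ : ContinuousAt φ 0)
    (hφ0 : φ 0 ≠ 0) : ∃ r > 0, ball 0 r ⊆ T3 ∧ ∀ q ∈ ball 0 r, φ 0 ^ 2 / 2 ≤ φ q ^ 2 := by
  have hnear : ∀ᶠ q in 𝓝 0, φ 0 ^ 2 / 2 < φ q ^ 2 :=
    continuousAt_const.eventually_lt (hφ.pow 2) (half_lt_self (by positivity))
  obtain ⟨ε, hε, hball⟩ := Metric.eventually_nhds_iff_ball.1 hnear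
  exact ⟨min ε π, lt_min hε pi_pos, ball_subset_T3 (min_le_right _ _),
    fun q hq => (hball q (ball_subset_ball (min_le_left _ _) hq)).le⟩

theorem setIntegral_T3_sq_div_uu_zero_left_pos {φ : (Fin 3 → ℝ) → ℝ} (hφ : Continuous φ)
    {a r : ℝ} (ha : 0 < a) (hr : 0 < r) (hrT : ball 0 r ⊆ T3)
    (hlow : ∀ q ∈ ball 0 r, a ≤ φ q ^ 2) : 0 < ∫ t in T3, φ t ^ 2 / uu 0 t := by
  have hnonneg (t : Fin 3 → ℝ) (ht : t ∈ T3) : 0 ≤ φ t ^ 2 / uu 0 t :=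
    div_nonneg (sq_nonneg _) ((by positivity : (0 : ℝ) ≤ _).trans (norm_sq_le_uu_zero_left ht))
  rw [setIntegral_pos_iff_support_of_nonneg_ae (ae_restrict_of_forall_mem measurableSet_T3 hnonneg)
    (integrableOn_T3_div_uu_zero_left (hφ.pow 2))]
  have hsub : ball 0 r \ {0} ⊆ Function.support (fun t => φ t ^ 2 / uu 0 t) ∩ T3 := by
    rintro q ⟨hq, hq0⟩
    exact ⟨div_ne_zero (ha.trans_le (hlow q hq)).ne' (uu_zero_left_pos (hrT hq) hq0).ne', hrT hq⟩
  calc 0 < volume (ball (0 : Fin 3 → ℝ) r) := measure_ball_pos volume 0 hr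
    _ = volume (ball 0 r \ {0}) := (measure_sdiff_null (measure_singleton 0)).symm
    _ ≤ _ := measure_mono hsub

theorem rpow_neg_four_le_div_uu_zero_left_sq {q : Fin 3 → ℝ} (hq : q ∈ T3) {a b : ℝ}
    (ha : 0 < a) (hb : a ≤ b ^ 2) : ‖q‖ ^ (-4 : ℝ) ≤ 9 / a * (b / uu 0 q) ^ 2 := by
  rcases eq_or_ne q 0 with rfl | hq0
  · rw [norm_zero, Real.zero_rpow (by norm_num)]
    positivity
  have hu := uu_zero_left_pos hq hq0
  have hu' : uu 0 q ≤ 3 * ‖q‖ ^ 2 := by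
    rw [uu_zero_left]
    linarith [eps_le_norm_sq q]
  calc ‖q‖ ^ (-4 : ℝ) = 9 / a * (a / (3 * ‖q‖ ^ 2) ^ 2) := by
        rw [Real.rpow_neg (norm_nonneg q), Real.rpow_ofNat]
        field_simp
        ring
    _ ≤ 9 / a * (b ^ 2 / uu 0 q ^ 2) := by gcongr
    _ = 9 / a * (b / uu 0 q) ^ 2 := by rw [div_pow]

theorem not_memLp_two_T3_div_uu_zero_left {φ : (Fin 3 → ℝ) → ℝ} {a r : ℝ} (ha : 0 < a)
    (hr : 0 < r) (hrT : ball 0 r ⊆ T3) (hlow : ∀ q ∈ ball 0 r, a ≤ φ q ^ 2) :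
    ¬ MemLp (fun q => φ q / uu 0 q) 2 (volume.restrict T3) := by
  intro hL2
  have hsq : IntegrableOn (fun q => (φ q / uu 0 q) ^ 2) (ball 0 r) :=
    IntegrableOn.mono_set ((memLp_two_iff_integrable_sq hL2.1).1 hL2) hrT
  have hsingular : IntegrableOn (fun q : Fin 3 → ℝ => ‖q‖ ^ (-4 : ℝ)) (ball 0 r) := by
    refine (hsq.const_mul (9 / a)).mono'
      (continuous_norm.measurable.pow_const _).aestronglyMeasurable ?_
    filter_upwards [ae_restrict_mem measurableSet_ball] with q hq
    rw [Real.norm_of_nonneg (by positivity)]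
    exact rpow_neg_four_le_div_uu_zero_left_sq (hrT hq) ha (hlow q hq)
  have := (integrableOn_ball_norm_rpow_iff volume hr).1 hsingular
  norm_num at this

theorem stmt11_general (φ : (Fin 3 → ℝ) → ℝ) (hφ : ∀ x, AnalyticAt ℝ φ x)
    (hφ0 : φ 0 ≠ 0)
    (μ₀ : ℝ) (hμ₀ : μ₀ = (∫ t in T3, φ t ^ 2 / uu 0 t)⁻¹) :
    (∀ q ∈ T3, q ≠ 0 →
      uu 0 q * (φ q / uu 0 q) - μ₀ * φ q * (∫ t in T3, φ t * (φ t / uu 0 t)) = 0) ∧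
    Integrable (fun q => φ q / uu 0 q) (volume.restrict T3) ∧
    ¬ MemLp (fun q => φ q / uu 0 q) 2 (volume.restrict T3) := by
  have hcont : Continuous φ := continuous_iff_continuousAt.2 fun x => (hφ x).continuousAt
  obtain ⟨r, hr, hrT, hlow⟩ := exists_ball_subset_T3_le_sq hcont.continuousAt hφ0
  have ha : 0 < φ 0 ^ 2 / 2 := by positivity
  have hI := (setIntegral_T3_sq_div_uu_zero_left_pos hcont ha hr hrT hlow).ne'
  refine ⟨fun q hq hq0 => ?_, integrableOn_T3_div_uu_zero_left hcont,
    not_memLp_two_T3_div_uu_zero_left ha hr hrT hlow⟩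
  have hu := (uu_zero_left_pos hq hq0).ne'
  simp_rw [mul_div_assoc', ← sq]
  rw [hμ₀]
  field_simp
  ring

/-- If `φ` is real-analytic and even with `φ(0) ≠ 0` and
`μ₀ = (∫ φ(t)²/u(0,t) dt)⁻¹`, then `f(q) = φ(q)/u(0,q)` satisfies
`h_{μ₀}(0) f = 0` pointwise (away from the singular point `q = 0`),
and `f ∈ L¹(𝕋³) \ L²(𝕋³)`. -/
theorem stmt11 (φ : (Fin 3 → ℝ) → ℝ) (hφ : ∀ x, AnalyticAt ℝ φ x)
    (hev : ∀ t, φ (-t) = φ t) (hφ0 : φ 0 ≠ 0)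
    (μ₀ : ℝ) (hμ₀ : μ₀ = (∫ t in T3, φ t ^ 2 / uu 0 t)⁻¹) :
    (∀ q ∈ T3, q ≠ 0 →
      uu 0 q * (φ q / uu 0 q) - μ₀ * φ q * (∫ t in T3, φ t * (φ t / uu 0 t)) = 0) ∧
    Integrable (fun q => φ q / uu 0 q) (volume.restrict T3) ∧
    ¬ MemLp (fun q => φ q / uu 0 q) 2 (volume.restrict T3) :=
  stmt11_general φ hφ hφ0 μ₀ hμ₀
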